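/- Let X be a partially ordered set, i : X → X an antitone map, and + a partial binary operation defined exactly on D₊ := {(x,y) ∈ X × X | y ≤ i(x)}, which is order-preserving in both coordinates (if (x,y) ∈ D₊, x' ≤ x and y' ≤ y then x' + y' ≤ x + y) and expanding (x ≤ x + y for all (x,y) ∈ D₊). Let ⋆ be a partial binary operation defined exactly on D⋆ := {(x,y) ∈ X × X | i(x) ≰ y}, and assume that for every (x,y) ∈ D⋆ and every w ∈ X with w ≤ i(x) and w ≰ y one has x ⋆ y ≤ x + w. Then for all lower sets u, v ⊆ X: f₊(u, v) ⊆ f⋆(u, v). -/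
import Mathlib

def fplus {X : Type*} [Preorder X] (i : X → X) (p : X → X → X) (u v : Set X) : Set X :=
  {x | ∃ w, w ≤ i x ∧ w ∉ v ∧ p x w ∈ u}

def fstar {X : Type*} [Preorder X] (i : X → X) (s : X → X → X) (u v : Set X) : Set X :=
  {x | ∀ y ∈ v, ¬ i x ≤ y ∧ s x y ∈ u}

theorem stmt12 {X : Type*} [PartialOrder X]
    (i : X → X) (hi : Antitone i) (p : X → X → X)
    (hmono : ∀ x y x' y' : X, y ≤ i x → x' ≤ x → y' ≤ y → p x' y' ≤ p x y)
    (hexp : ∀ x y : X, y ≤ i x → x ≤ p x y)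
    (s : X → X → X)
    (hsp : ∀ x y w : X, ¬ i x ≤ y → w ≤ i x → ¬ w ≤ y → s x y ≤ p x w)
    (u v : Set X) (hu : IsLowerSet u) (hv : IsLowerSet v) :
    fplus i p u v ⊆ fstar i s u v := by
  rintro x ⟨w, hw, hwv, hpu⟩ y hy
  have hwy : ¬ w ≤ y := fun h => hwv (hv h hy)
  have hixy : ¬ i x ≤ y := fun h => hwy (hw.trans h)
  exact ⟨hixy, hu (hsp x y w hixy hw hwy) hpu⟩
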